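/- Let n ≥ 1, d ≥ 1, k ≥ 1, and let δ be a ℂ-derivation of ℂ[x₀,…,xₙ] = MvPolynomial (Fin (n+1)) ℂ such that δ(xᵢ) is homogeneous of degree d for every i. Suppose the extactic determinant E_k(δ) = det(δ^[i](m_j))_{0 ≤ i ≤ N−1, 1 ≤ j ≤ N} vanishes, where (m_1, …, m_N) is an enumeration of the N = C(n+k,k) monomials of degree k. Then δ admits a rational first integral: there exist polynomials u, v, linearly independent over ℂ, with v·δ(u) = u·δ(v). -/

import Mathlib

/-!
The extactic matrix is the Wronskian of the degree-`k` monomials with respect to `δ`. By the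
classical induction on the size of a Wronskian, its vanishing yields a nontrivial relation
`∑ b j * m j = 0` whose coefficients have pairwise `δ`-constant ratios:
`b l * δ (b j) = b j * δ (b l)`. The monomials are `ℂ`-linearly independent, so the `b j` cannot
all be `ℂ`-multiples of a single one, and two `ℂ`-independent coefficients form a rational first
integral.
-/

open Matrix

namespace Matrix

variable {R : Type*} [CommRing R] [IsDomain R] {N : ℕ}

theorem eq_zero_of_mulVec_eq_zero_of_last_eq_zero {M : Matrix (Fin N) (Fin (N + 1)) R}
    (hM : (M.submatrix id Fin.castSucc).det ≠ 0) {v : Fin (N + 1) → R} (hv : M *ᵥ v = 0)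
    (hlast : v (Fin.last N) = 0) : v = 0 := by
  have hinit : M.submatrix id Fin.castSucc *ᵥ (v ∘ Fin.castSucc) = 0 := by
    funext i
    have := congrFun hv i
    simpa [mulVec, dotProduct, Fin.sum_univ_castSucc, hlast] using this
  have hinit_zero : v ∘ Fin.castSucc = 0 := by
    by_contra hne
    exact hM (exists_mulVec_eq_zero_iff.mp ⟨_, hne, hinit⟩)
  funext j
  exact Fin.lastCases hlast (fun j' => congrFun hinit_zero j') j

theorem smul_eq_smul_of_mulVec_eq_zero {M : Matrix (Fin N) (Fin (N + 1)) R}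
    (hM : (M.submatrix id Fin.castSucc).det ≠ 0) {v w : Fin (N + 1) → R}
    (hv : M *ᵥ v = 0) (hw : M *ᵥ w = 0) :
    v (Fin.last N) • w = w (Fin.last N) • v := by
  have h := eq_zero_of_mulVec_eq_zero_of_last_eq_zero hM
    (v := v (Fin.last N) • w - w (Fin.last N) • v)
    (by rw [mulVec_sub, mulVec_smul, mulVec_smul, hv, hw, smul_zero, smul_zero, sub_zero])
    (by simp only [Pi.sub_apply, Pi.smul_apply, smul_eq_mul]; ring)
  exact sub_eq_zero.mp h

end Matrix

namespace Derivation

variable {A R ι : Type*} [CommRing A] [CommRing R] [Algebra A R] (δ : Derivation A R R)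

def wronskianMatrix (M : ℕ) (f : ι → R) : Matrix (Fin M) ι R :=
  Matrix.of fun i j => (⇑δ)^[(i : ℕ)] (f j)

variable {δ} [Fintype ι] {M : ℕ} {f b : ι → R}

theorem wronskianMatrix_mulVec_eq_zero_of_succ
    (hb : δ.wronskianMatrix (M + 1) f *ᵥ b = 0) : δ.wronskianMatrix M f *ᵥ b = 0 := by
  funext i
  exact congrFun hb i.castSucc

/-- Differentiate the relation given by row `i` and subtract the one given by row `i + 1`. -/
theorem wronskianMatrix_mulVec_derivation_eq_zero
    (hb : δ.wronskianMatrix (M + 1) f *ᵥ b = 0) :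
    δ.wronskianMatrix M f *ᵥ (fun j => δ (b j)) = 0 := by
  funext i
  have hrow : ∑ j, (⇑δ)^[(i : ℕ)] (f j) * b j = 0 := congrFun hb i.castSucc
  have hnext : ∑ j, b j * δ ((⇑δ)^[(i : ℕ)] (f j)) = 0 := by
    have := congrFun hb i.succ
    simpa only [wronskianMatrix, mulVec, dotProduct, of_apply, Fin.val_succ,
      Function.iterate_succ_apply', Pi.zero_apply, mul_comm] using this
  have hderiv := congrArg δ hrow
  simp only [map_sum, leibniz, smul_eq_mul, Finset.sum_add_distrib, map_zero, hnext,
    add_zero] at hderiv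
  exact hderiv

variable [IsDomain R]

theorem exists_ratios_constant_of_det_wronskianMatrix_eq_zero :
    ∀ {N : ℕ} (f : Fin N → R), (δ.wronskianMatrix N f).det = 0 →
      ∃ b : Fin N → R, b ≠ 0 ∧ (∀ j l, b l * δ (b j) = b j * δ (b l)) ∧
        ∑ j, b j * f j = 0
  | 0, _, h => absurd h (by simp)
  | N + 1, f, h => by
    by_cases hinit : (δ.wronskianMatrix N (f ∘ Fin.castSucc)).det = 0
    · obtain ⟨b, hb0, hconst, hsum⟩ :=
        exists_ratios_constant_of_det_wronskianMatrix_eq_zero _ hinit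
      refine ⟨Fin.snoc b 0, fun h => hb0 (funext fun j => ?_), fun j l => ?_, ?_⟩
      · simpa using congrFun h j.castSucc
      · induction j using Fin.lastCases <;> induction l using Fin.lastCases <;> simp [hconst]
      · simpa [Fin.sum_univ_castSucc] using hsum
    · obtain ⟨b, hb0, hb⟩ := exists_mulVec_eq_zero_iff.mpr h
      have hminor : ((δ.wronskianMatrix N f).submatrix id Fin.castSucc).det ≠ 0 := hinit
      have hbinit := wronskianMatrix_mulVec_eq_zero_of_succ hb
      have hlast : b (Fin.last N) ≠ 0 := fun h0 =>
        hb0 (eq_zero_of_mulVec_eq_zero_of_last_eq_zero hminor hbinit h0)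
      have hprop := smul_eq_smul_of_mulVec_eq_zero hminor hbinit
        (wronskianMatrix_mulVec_derivation_eq_zero hb)
      refine ⟨b, hb0, fun j l => mul_left_cancel₀ hlast ?_, ?_⟩
      · have hj := congrFun hprop j
        have hl := congrFun hprop l
        simp only [Pi.smul_apply, smul_eq_mul] at hj hl
        linear_combination b l * hj - b j * hl
      · simpa [wronskianMatrix, mulVec, dotProduct, mul_comm] using congrFun hb 0

end Derivation

theorem exists_linearIndependent_pair_of_sum_mul_eq_zero {K R ι : Type*} [Field K] [CommRing R]
    [IsDomain R] [Algebra K R] [Fintype ι] {f : ι → R} (hf : LinearIndependent K f)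
    {b : ι → R} (hb0 : b ≠ 0) (hsum : ∑ j, b j * f j = 0) :
    ∃ j l, LinearIndependent K ![b j, b l] := by
  by_contra! hdep
  obtain ⟨j₀, hj₀⟩ : ∃ j, b j ≠ 0 := Function.ne_iff.mp hb0
  have hmul : ∀ j, ∃ γ : K, γ • b j₀ = b j := fun j => by
    simpa [LinearIndependent.pair_iff' hj₀] using hdep j₀ j
  choose γ hγ using hmul
  have hcomb : ∑ j, γ j • f j = 0 := by
    refine (mul_eq_zero.mp ?_).resolve_left hj₀
    rw [Finset.mul_sum, ← hsum]
    refine Finset.sum_congr rfl fun j _ => ?_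
    rw [← hγ j, smul_mul_assoc, mul_smul_comm]
  have hγ₀ := Fintype.linearIndependent_iff.mp hf γ hcomb j₀
  exact hj₀ (by rw [← hγ j₀, hγ₀, zero_smul])

theorem rational_first_integral_of_extactic_vanishes_general (n k : ℕ)
    (δ : Derivation ℂ (MvPolynomial (Fin (n + 1)) ℂ) (MvPolynomial (Fin (n + 1)) ℂ))
    (N : ℕ)
    (m : Fin N → {e : Fin (n + 1) →₀ ℕ // ∑ i, e i = k}) (hm : Function.Bijective m)
    (hvan : Matrix.det (Matrix.of fun i j : Fin N =>
        (⇑δ)^[(i : ℕ)] (MvPolynomial.monomial (m j).1 (1 : ℂ))) = 0) :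
    ∃ u v : MvPolynomial (Fin (n + 1)) ℂ,
      LinearIndependent ℂ ![u, v] ∧ v * δ u = u * δ v := by
  obtain ⟨b, hb0, hconst, hsum⟩ :=
    δ.exists_ratios_constant_of_det_wronskianMatrix_eq_zero _ hvan
  have hmonomials : LinearIndependent ℂ fun j => MvPolynomial.monomial (m j).1 (1 : ℂ) :=
    (MvPolynomial.basisMonomials _ ℂ).linearIndependent.comp _
      (Subtype.val_injective.comp hm.injective)
  obtain ⟨j, l, hjl⟩ := exists_linearIndependent_pair_of_sum_mul_eq_zero hmonomials hb0 hsum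
  exact ⟨b j, b l, hjl, hconst j l⟩

/-- Pereira's Theorem 3, projective algebraic form: if the extactic determinant
`E_k(δ) = det (δ^[i] (m j))` vanishes (with `m` enumerating the `N = C(n+k,k)` monic
monomials of degree `k`), then `δ` admits a rational first integral, i.e. there are
polynomials `u, v`, linearly independent over `ℂ`, with `v * δ u = u * δ v`. -/
theorem rational_first_integral_of_extactic_vanishes (n d k : ℕ)
    (hn : 1 ≤ n) (hd : 1 ≤ d) (hk : 1 ≤ k)
    (δ : Derivation ℂ (MvPolynomial (Fin (n + 1)) ℂ) (MvPolynomial (Fin (n + 1)) ℂ))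
    (hδ : ∀ i, (δ (MvPolynomial.X i)).IsHomogeneous d)
    (N : ℕ) (hN : N = (n + k).choose k)
    (m : Fin N → {e : Fin (n + 1) →₀ ℕ // ∑ i, e i = k}) (hm : Function.Bijective m)
    (hvan : Matrix.det (Matrix.of fun i j : Fin N =>
        (⇑δ)^[(i : ℕ)] (MvPolynomial.monomial (m j).1 (1 : ℂ))) = 0) :
    ∃ u v : MvPolynomial (Fin (n + 1)) ℂ,
      LinearIndependent ℂ ![u, v] ∧ v * δ u = u * δ v :=
  rational_first_integral_of_extactic_vanishes_general n k δ N m hm hvan
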